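/- Let L be the analytic continuation of y ↦ Li₂(-e^y) from the strip ℝ + i(-π,π) to ℂ with the two vertical branch cuts i(-∞,-π) and i(π,∞), defined to be 2πi-periodic on the left half-plane Re y < 0. Then for every y with Re y > 0, L satisfies the functional equation L(y + 2πi) = L(y) - 2πi(y + πi). -/

import Mathlib

/-
The symmetrized function `N y = L y + L (-y) + y² / 2` is holomorphic on the cut plane, which is
connected and symmetric under `y ↦ -y`. On the real axis `N` is constant: this is the inversion
formula `Li₂(-eˣ) + Li₂(-e⁻ˣ) = -x²/2 + 2 Li₂(-1)`, whose two sides have the same derivative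
because `log (1 + e⁻ˣ) = log (1 + eˣ) - x`. By the identity theorem `N` is constant on the whole
cut plane. For `Re y > 0` the point `-y` lies in the left half-plane, where `L` is `2πi`-periodic,
so comparing `N (y + 2πi)` with `N y` leaves only the change of `y² / 2`.
-/

open Complex Real

/-- The principal dilogarithm, `Li₂(z) = -∫₀^z Log(1-u) du/u`. -/
noncomputable def dilog (z : ℂ) : ℂ :=
  -∫ t in (0:ℝ)..1, Complex.log (1 - (t : ℂ) * z) / (t : ℂ)

open Set Filter Topology MeasureTheory intervalIntegral

noncomputable def negDilogNeg (a : ℝ) : ℝ := ∫ s in (0 : ℝ)..a, Real.log (1 + s) / s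

lemma abs_log_one_add_div_self_le_one {s : ℝ} (hs : 0 ≤ s) : |Real.log (1 + s) / s| ≤ 1 := by
  rw [abs_div, abs_of_nonneg (Real.log_nonneg (by linarith)), abs_of_nonneg hs]
  exact div_le_one_of_le₀ ((Real.log_le_sub_one_of_pos (by linarith)).trans_eq (by ring)) hs

lemma intervalIntegrable_log_one_add_div_self {a : ℝ} (ha : 0 ≤ a) :
    IntervalIntegrable (fun s => Real.log (1 + s) / s) volume 0 a := by
  refine (intervalIntegrable_const (c := (1 : ℝ))).mono_fun'
    (by fun_prop : Measurable _).aestronglyMeasurable ?_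
  rw [uIoc_of_le ha]
  filter_upwards [ae_restrict_mem measurableSet_Ioc] with s hs
  exact abs_log_one_add_div_self_le_one hs.1.le

lemma hasDerivAt_negDilogNeg {a : ℝ} (ha : 0 < a) :
    HasDerivAt negDilogNeg (Real.log (1 + a) / a) a :=
  integral_hasDerivAt_right (intervalIntegrable_log_one_add_div_self ha.le)
    (by fun_prop : Measurable _).stronglyMeasurable.stronglyMeasurableAtFilter
    (by fun_prop (disch := positivity))

lemma dilog_neg_ofReal {a : ℝ} (ha : 0 ≤ a) : dilog (-(a : ℂ)) = -(negDilogNeg a : ℂ) := by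
  have hreal : ∀ t ∈ uIcc (0 : ℝ) 1, Complex.log (1 - (t : ℂ) * -(a : ℂ)) / t
      = ((a * (Real.log (1 + t * a) / (t * a)) : ℝ) : ℂ) := by
    intro t ht
    rw [uIcc_of_le zero_le_one] at ht
    have hpos : 0 ≤ 1 + t * a := by nlinarith [ht.1]
    rw [show 1 - (t : ℂ) * -(a : ℂ) = ((1 + t * a : ℝ) : ℂ) by push_cast; ring,
      ← Complex.ofReal_log hpos]
    rcases eq_or_ne a 0 with rfl | ha0
    · simp
    · push_cast
      rw [mul_div_assoc', mul_comm (a : ℂ), mul_div_mul_right _ _ (ofReal_ne_zero.2 ha0)]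
  rw [dilog, integral_congr hreal, intervalIntegral.integral_ofReal,
    intervalIntegral.integral_const_mul, ← smul_eq_mul,
    smul_integral_comp_mul_right (fun s => Real.log (1 + s) / s), zero_mul, one_mul, negDilogNeg]

lemma Real.log_one_add_exp_neg (x : ℝ) :
    Real.log (1 + Real.exp (-x)) = Real.log (1 + Real.exp x) - x := by
  rw [← Real.log_exp x, ← Real.log_div (by positivity) (Real.exp_ne_zero x), Real.log_exp,
    add_div, div_self (Real.exp_ne_zero x), Real.exp_neg, one_div, add_comm]

lemma negDilogNeg_exp_add_negDilogNeg_exp_neg (x : ℝ) :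
    negDilogNeg (Real.exp x) + negDilogNeg (Real.exp (-x)) = x ^ 2 / 2 + 2 * negDilogNeg 1 := by
  let g : ℝ → ℝ := fun x => negDilogNeg (Real.exp x) + negDilogNeg (Real.exp (-x)) - x ^ 2 / 2
  have hg : ∀ x, HasDerivAt g 0 x := by
    intro x
    have h₁ := (hasDerivAt_negDilogNeg (Real.exp_pos x)).comp x (Real.hasDerivAt_exp x)
    have h₂ := (hasDerivAt_negDilogNeg (Real.exp_pos (-x))).comp x (hasDerivAt_neg' x).exp
    refine ((h₁.add h₂).sub ((hasDerivAt_pow 2 x).div_const 2)).congr_deriv ?_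
    rw [Real.log_one_add_exp_neg]
    field_simp
    ring
  have hconst :=
    is_const_of_deriv_eq_zero (fun x => (hg x).differentiableAt) (fun x => (hg x).deriv) x 0
  simp only [g, neg_zero, Real.exp_zero] at hconst
  linarith

def cutPlane : Set ℂ := {y : ℂ | ¬(y.re = 0 ∧ (y.im ≤ -π ∨ π ≤ y.im))}

lemma mem_cutPlane_iff {y : ℂ} :
    y ∈ cutPlane ↔ y.re ≠ 0 ∨ (-π < y.im ∧ y.im < π) := by
  simp only [cutPlane, mem_ofPred_eq, not_and_or, not_or, not_le]

lemma neg_mem_cutPlane {y : ℂ} (hy : y ∈ cutPlane) : -y ∈ cutPlane := by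
  rw [mem_cutPlane_iff] at hy ⊢
  simp only [neg_re, neg_im, ne_eq, neg_eq_zero, neg_lt_neg_iff, neg_lt]
  tauto

lemma isOpen_cutPlane : IsOpen cutPlane :=
  (((isClosed_eq continuous_re continuous_const).inter
    ((isClosed_le continuous_im continuous_const).union
      (isClosed_le continuous_const continuous_im)))).isOpen_compl

lemma isPreconnected_cutPlane : IsPreconnected cutPlane := by
  have hstrip : IsPreconnected {y : ℂ | -π < y.im ∧ y.im < π} :=
    ((convex_halfSpace_im_gt (-π)).inter (convex_halfSpace_im_lt π)).isPreconnected
  have hleft := hstrip.union (-1 : ℂ) (by simp [pi_pos]) (by simp)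
    (convex_halfSpace_re_lt 0).isPreconnected
  have hall := hleft.union (1 : ℂ) (by simp [pi_pos]) (by simp)
    (convex_halfSpace_re_gt 0).isPreconnected
  convert hall using 1
  ext y
  simp only [mem_cutPlane_iff, mem_union, mem_ofPred_eq, ne_iff_lt_or_gt]
  tauto

theorem AnalyticOnNhd.eqOn_of_preconnected_of_ofReal_eq {E : Type*} [NormedAddCommGroup E]
    [NormedSpace ℂ E] {f g : ℂ → E} {U : Set ℂ} (hf : AnalyticOnNhd ℂ f U)
    (hg : AnalyticOnNhd ℂ g U) (hU : IsPreconnected U) {x₀ : ℝ} (hx₀ : (x₀ : ℂ) ∈ U)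
    (hfg : ∀ x : ℝ, f x = g x) : EqOn f g U := by
  have hreal : Tendsto ((↑) : ℝ → ℂ) (𝓝[≠] x₀) (𝓝[≠] (x₀ : ℂ)) :=
    continuous_ofReal.continuousWithinAt.tendsto_nhdsWithin fun _ hx ↦ by simpa using hx
  exact hf.eqOn_of_preconnected_of_frequently_eq hg hU hx₀
    (hreal.frequently (Frequently.of_forall hfg))

lemma dilog_neg_exp_add_dilog_neg_exp_neg (x : ℝ) :
    dilog (-exp (x : ℂ)) + dilog (-exp (-(x : ℂ))) + (x : ℂ) ^ 2 / 2 = 2 * dilog (-1) := by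
  have h := congrArg ((↑) : ℝ → ℂ) (negDilogNeg_exp_add_negDilogNeg_exp_neg x)
  push_cast at h
  rw [← ofReal_neg, ← ofReal_exp, ← ofReal_exp, ← ofReal_one, dilog_neg_ofReal (Real.exp_pos x).le,
    dilog_neg_ofReal (Real.exp_pos (-x)).le, dilog_neg_ofReal zero_le_one]
  linear_combination -h

/-- Let `L` be the analytic continuation of `y ↦ Li₂(-e^y)` from the strip `ℝ + i(-π,π)`
to `ℂ` minus the two vertical cuts `i(-∞,-π)` and `i(π,∞)`, defined to be `2πi`-periodic
on the left half-plane `Re y < 0`. Then for `Re y > 0`,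
`L(y + 2πi) = L(y) - 2πi(y + πi)`. -/
theorem extended_dilog_functional_equation (L : ℂ → ℂ)
    (hholo : DifferentiableOn ℂ L {y : ℂ | ¬(y.re = 0 ∧ (y.im ≤ -π ∨ π ≤ y.im))})
    (hstrip : ∀ y : ℂ, -π < y.im → y.im < π → L y = dilog (-Complex.exp y))
    (hper : ∀ y : ℂ, y.re < 0 → L (y + 2 * (π : ℂ) * Complex.I) = L y) :
    ∀ y : ℂ, 0 < y.re →
      L (y + 2 * (π : ℂ) * Complex.I)
        = L y - 2 * (π : ℂ) * Complex.I * (y + (π : ℂ) * Complex.I) := by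
  intro y hy
  have hsymm : EqOn (fun y ↦ L y + L (-y) + y ^ 2 / 2) (fun _ ↦ 2 * dilog (-1)) cutPlane := by
    refine AnalyticOnNhd.eqOn_of_preconnected_of_ofReal_eq ?_ analyticOnNhd_const
      isPreconnected_cutPlane (x₀ := 0) (by simp [mem_cutPlane_iff, pi_pos]) fun x ↦ ?_
    · exact ((hholo.add (hholo.comp (differentiableOn_neg _) fun _ ↦ neg_mem_cutPlane)).add
        (by fun_prop)).analyticOnNhd isOpen_cutPlane
    · rw [hstrip x (by simp [pi_pos]) (by simp [pi_pos]),
        hstrip (-x) (by simp [pi_pos]) (by simp [pi_pos])]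
      exact dilog_neg_exp_add_dilog_neg_exp_neg x
  have hmem : ∀ z : ℂ, 0 < z.re → z ∈ cutPlane :=
    fun z hz ↦ mem_cutPlane_iff.2 (Or.inl hz.ne')
  have hperiod : L (-(y + 2 * π * I)) = L (-y) := by
    have h := hper (-(y + 2 * π * I)) (by simpa using hy)
    rwa [show -(y + 2 * π * I) + 2 * π * I = -y by ring, eq_comm] at h
  have h₁ := hsymm (hmem y hy)
  have h₂ := hsymm (hmem (y + 2 * π * I) (by simpa using hy))
  dsimp only at h₁ h₂
  linear_combination h₂ - h₁ - hperiod
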